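/- Let H₀, H₁: Ω → ℝ with Boltzmann measures μ₀, μ₁ (densities proportional to exp(-βH₀), exp(-βH₁)) and ΔF = -β⁻¹ log(Z₁/Z₀) where Z_i = ∫_Ω exp(-βH_i). Assume Z₀, Z₁ ∈ (0,∞) and U = H₁ - H₀ is integrable under both μ₀ and μ₁. Then E_{μ₁}[U] ≤ ΔF ≤ E_{μ₀}[U]. -/
import Mathlib


open MeasureTheory

lemma bogoliubov_key {X : Type*} [MeasurableSpace X] (μ : Measure X) (w v g : X → ℝ)
    (hw : Integrable w μ) (hv : Integrable v μ) (hg : Integrable g μ)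
    (hZ : 0 < ∫ r, w r ∂μ) (hgZ : 0 < ∫ r, g r ∂μ) (m : ℝ)
    (hm : m * ∫ r, w r ∂μ = -∫ r, v r ∂μ)
    (hpt : ∀ r, Real.exp m * ((1 - m) * w r - v r) ≤ g r) :
    m + Real.log (∫ r, w r ∂μ) ≤ Real.log (∫ r, g r ∂μ) := by
  have hlow : Integrable (fun r => Real.exp m * ((1 - m) * w r - v r)) μ :=
    (((hw.const_mul (1 - m)).sub hv).const_mul _)
  have h1 : Real.exp m * ∫ r, w r ∂μ ≤ ∫ r, g r ∂μ := by
    have h2 := integral_mono hlow hg hpt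
    have h3 : ∫ r, Real.exp m * ((1 - m) * w r - v r) ∂μ
        = Real.exp m * ∫ r, w r ∂μ := by
      rw [integral_const_mul, integral_sub (hw.const_mul (1 - m)) hv, integral_const_mul]
      have hv' : ∫ r, v r ∂μ = -(m * ∫ r, w r ∂μ) := by linarith [hm]
      rw [hv']; ring
    linarith [h3 ▸ h2]
  calc m + Real.log (∫ r, w r ∂μ) = Real.log (Real.exp m * ∫ r, w r ∂μ) := by
        rw [Real.log_mul (Real.exp_ne_zero m) (ne_of_gt hZ), Real.log_exp]
    _ ≤ Real.log (∫ r, g r ∂μ) :=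
        Real.log_le_log (by positivity) h1

/-- Two-sided Bogoliubov inequality for Gibbs measures: with Boltzmann measures
`μ₀, μ₁` of densities proportional to `exp (-β H₀)`, `exp (-β H₁)` on `Ω`,
`Z_i = ∫_Ω exp (-β H_i) ∈ (0, ∞)`, `U = H₁ - H₀` integrable under both, and
`ΔF = -β⁻¹ log (Z₁/Z₀)`, one has `E_{μ₁}[U] ≤ ΔF ≤ E_{μ₀}[U]`. -/
theorem two_sided_bogoliubov {N : ℕ} (Ω : Set (Fin N → ℝ)) (hΩ : MeasurableSet Ω)
    (H₀ H₁ : (Fin N → ℝ) → ℝ) (hH₀ : Measurable H₀) (hH₁ : Measurable H₁)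
    (β : ℝ) (hβ : 0 < β)
    (hZ₀int : IntegrableOn (fun r => Real.exp (-β * H₀ r)) Ω)
    (hZ₁int : IntegrableOn (fun r => Real.exp (-β * H₁ r)) Ω)
    (hZ₀pos : 0 < ∫ r in Ω, Real.exp (-β * H₀ r))
    (hZ₁pos : 0 < ∫ r in Ω, Real.exp (-β * H₁ r))
    (hU₀ : IntegrableOn (fun r => (H₁ r - H₀ r) * Real.exp (-β * H₀ r)) Ω)
    (hU₁ : IntegrableOn (fun r => (H₁ r - H₀ r) * Real.exp (-β * H₁ r)) Ω)
    (ΔF : ℝ)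
    (hΔF : ΔF = -β⁻¹ * Real.log
      ((∫ r in Ω, Real.exp (-β * H₁ r)) / ∫ r in Ω, Real.exp (-β * H₀ r))) :
    (∫ r in Ω, (H₁ r - H₀ r) * Real.exp (-β * H₁ r)) / (∫ r in Ω, Real.exp (-β * H₁ r)) ≤ ΔF ∧
    ΔF ≤ (∫ r in Ω, (H₁ r - H₀ r) * Real.exp (-β * H₀ r)) / (∫ r in Ω, Real.exp (-β * H₀ r)) := by
  set Z₀ := ∫ r in Ω, Real.exp (-β * H₀ r) with hZ₀def
  set Z₁ := ∫ r in Ω, Real.exp (-β * H₁ r) with hZ₁def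
  set E₀ := (∫ r in Ω, (H₁ r - H₀ r) * Real.exp (-β * H₀ r)) / Z₀ with hE₀def
  set E₁ := (∫ r in Ω, (H₁ r - H₀ r) * Real.exp (-β * H₁ r)) / Z₁ with hE₁def
  -- Upper bound: log(Z₁/Z₀) ≥ -β E₀
  have hub : -β * E₀ + Real.log Z₀ ≤ Real.log Z₁ := by
    apply bogoliubov_key (volume.restrict Ω) (fun r => Real.exp (-β * H₀ r))
      (fun r => β * (H₁ r - H₀ r) * Real.exp (-β * H₀ r))
      (fun r => Real.exp (-β * H₁ r)) hZ₀int
      (by simpa [mul_assoc] using hU₀.const_mul β) hZ₁int hZ₀pos hZ₁pos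
    · have : ∫ r in Ω, β * (H₁ r - H₀ r) * Real.exp (-β * H₀ r)
          = β * ∫ r in Ω, (H₁ r - H₀ r) * Real.exp (-β * H₀ r) := by
        rw [← integral_const_mul]; simp [mul_assoc]
      rw [this]
      have hEZ : E₀ * Z₀ = ∫ r in Ω, (H₁ r - H₀ r) * Real.exp (-β * H₀ r) :=
        div_mul_cancel₀ _ hZ₀pos.ne'
      linear_combination (-β) * hEZ
    · intro r
      have h := Real.add_one_le_exp ((-β * (H₁ r - H₀ r)) - (-β * E₀))
      have hw : 0 < Real.exp (-β * H₀ r) := Real.exp_pos _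
      have key : Real.exp (-β * E₀) * ((-β * (H₁ r - H₀ r)) - (-β * E₀) + 1)
          ≤ Real.exp (-β * (H₁ r - H₀ r)) := by
        calc Real.exp (-β * E₀) * ((-β * (H₁ r - H₀ r)) - (-β * E₀) + 1)
            ≤ Real.exp (-β * E₀) * Real.exp ((-β * (H₁ r - H₀ r)) - (-β * E₀)) := by
              exact mul_le_mul_of_nonneg_left h (Real.exp_pos _).le
          _ = Real.exp (-β * (H₁ r - H₀ r)) := by rw [← Real.exp_add]; congr 1; ring
      have := mul_le_mul_of_nonneg_right key hw.le
      have hexp : Real.exp (-β * (H₁ r - H₀ r)) * Real.exp (-β * H₀ r)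
          = Real.exp (-β * H₁ r) := by rw [← Real.exp_add]; congr 1; ring
      nlinarith [this, hexp]
  -- Lower bound: log(Z₀/Z₁) ≥ β E₁
  have hlb : β * E₁ + Real.log Z₁ ≤ Real.log Z₀ := by
    apply bogoliubov_key (volume.restrict Ω) (fun r => Real.exp (-β * H₁ r))
      (fun r => -β * (H₁ r - H₀ r) * Real.exp (-β * H₁ r))
      (fun r => Real.exp (-β * H₀ r)) hZ₁int
      (by simpa [mul_assoc] using hU₁.const_mul (-β)) hZ₀int hZ₁pos hZ₀pos
    · have : ∫ r in Ω, -β * (H₁ r - H₀ r) * Real.exp (-β * H₁ r)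
          = -β * ∫ r in Ω, (H₁ r - H₀ r) * Real.exp (-β * H₁ r) := by
        rw [← integral_const_mul]; simp [mul_assoc]
      rw [this]
      have hEZ : E₁ * Z₁ = ∫ r in Ω, (H₁ r - H₀ r) * Real.exp (-β * H₁ r) :=
        div_mul_cancel₀ _ hZ₁pos.ne'
      linear_combination β * hEZ
    · intro r
      have h := Real.add_one_le_exp ((β * (H₁ r - H₀ r)) - (β * E₁))
      have hw : 0 < Real.exp (-β * H₁ r) := Real.exp_pos _
      have key : Real.exp (β * E₁) * ((β * (H₁ r - H₀ r)) - (β * E₁) + 1)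
          ≤ Real.exp (β * (H₁ r - H₀ r)) := by
        calc Real.exp (β * E₁) * ((β * (H₁ r - H₀ r)) - (β * E₁) + 1)
            ≤ Real.exp (β * E₁) * Real.exp ((β * (H₁ r - H₀ r)) - (β * E₁)) := by
              exact mul_le_mul_of_nonneg_left h (Real.exp_pos _).le
          _ = Real.exp (β * (H₁ r - H₀ r)) := by rw [← Real.exp_add]; congr 1; ring
      have := mul_le_mul_of_nonneg_right key hw.le
      have hexp : Real.exp (β * (H₁ r - H₀ r)) * Real.exp (-β * H₁ r)
          = Real.exp (-β * H₀ r) := by rw [← Real.exp_add]; congr 1; ring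
      nlinarith [this, hexp]
  have hlog : Real.log (Z₁ / Z₀) = Real.log Z₁ - Real.log Z₀ :=
    Real.log_div (ne_of_gt hZ₁pos) (ne_of_gt hZ₀pos)
  rw [hΔF, hlog]
  constructor
  · show E₁ ≤ _
    have hβinv : 0 < β⁻¹ := inv_pos.mpr hβ
    have h1 : Real.log Z₁ - Real.log Z₀ ≤ -β * E₁ := by linarith
    have := mul_le_mul_of_nonneg_left h1 hβinv.le
    have hβne : β ≠ 0 := ne_of_gt hβ
    calc E₁ = -β⁻¹ * (-β * E₁) := by field_simp
      _ ≤ -β⁻¹ * (Real.log Z₁ - Real.log Z₀) := by nlinarith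
  · show _ ≤ E₀
    have hβinv : 0 < β⁻¹ := inv_pos.mpr hβ
    have h1 : -β * E₀ ≤ Real.log Z₁ - Real.log Z₀ := by linarith
    have hβne : β ≠ 0 := ne_of_gt hβ
    calc -β⁻¹ * (Real.log Z₁ - Real.log Z₀) ≤ -β⁻¹ * (-β * E₀) := by nlinarith
      _ = E₀ := by field_simp
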